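/- Let G be a finite group and H a subgroup whose index q has largest prime divisor p_k and smallest prime divisor p₁. Then ψ'_H(G) < (p_k + 1)/p₁. In particular, if q is a prime power p^α, then ψ'_H(G) < (p+1)/p ≤ 3/2. -/

import Mathlib

open Finset

/-- The order of `x` relative to the subgroup `H`: the least positive `m` with `x ^ m ∈ H`. -/
noncomputable def relOrder {G : Type*} [Group G] (H : Subgroup G) (x : G) : ℕ :=
  sInf {m : ℕ | 0 < m ∧ x ^ m ∈ H}

/-- `ψ_H(G)`, the sum of element orders of `G` relative to the subgroup `H`. -/
noncomputable def psiRel (G : Type*) [Group G] [Fintype G] (H : Subgroup G) : ℕ :=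
  ∑ x : G, relOrder H x

/-- `ψ(G)`, the sum of element orders of `G`. -/
noncomputable def psi (G : Type*) [Group G] [Fintype G] : ℕ :=
  ∑ x : G, orderOf x

/-!
Every relative order `o_H(x)` is at most `q = |G : H|` (it is the length of the `⟨x⟩`-orbit of the
coset `H` in `G ⧸ H`), and `o_H(1) = 1 < q`, so `ψ_H(G) < |G| q = |H| q²`. In the cyclic group the
subgroup `K` is normal and `o_K(x)` is the order of `xK` in the cyclic quotient of order `q`, so
`ψ_K(C_n) = |H| ψ(C_q)`. Now `ψ(C_q) = ∑_{d ∣ q} φ(d) d` is multiplicative with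
`(p + 1) ψ(C_{p^a}) = p^{2a+1} + 1 > p^{2a+1}`, whence `q² ≤ ψ(C_q) ∏_{p ∣ q} (p + 1)/p`, and the
product is at most the telescoping `∏_{p₁ ≤ j ≤ p_k} (j + 1)/j = (p_k + 1)/p₁`.
-/

open Function MulAction

section RelOrder

variable {G : Type*} [Group G] (H : Subgroup G)

lemma relOrder_eq_period (x : G) : relOrder H x = period x ((1 : G) : G ⧸ H) := by
  rw [period_eq_minimalPeriod, minimalPeriod_eq_sInf_n_pos_IsPeriodicPt, relOrder]
  congr! 3 with m
  simp only [isPeriodicPt_smul_iff, MulAction.Quotient.smul_mk, smul_eq_mul, mul_one,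
    QuotientGroup.eq, inv_mem_iff, gt_iff_lt]

lemma relOrder_pos [Finite G] (x : G) : 0 < relOrder H x := by
  rw [relOrder_eq_period]
  exact period_pos_of_orderOf_pos (orderOf_pos x) _

lemma relOrder_one : relOrder H 1 = 1 := by
  rw [relOrder_eq_period, period_one]

lemma relOrder_le_index [Finite G] (x : G) : relOrder H x ≤ H.index := by
  have : Fintype (G ⧸ H) := Fintype.ofFinite _
  rw [relOrder_eq_period, H.index_eq_card, Nat.card_eq_fintype_card]
  exact minimalPeriod_le_card

lemma relOrder_eq_orderOf_mk [H.Normal] (x : G) : relOrder H x = orderOf (x : G ⧸ H) := by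
  rw [relOrder_eq_period, period_eq_minimalPeriod, orderOf]
  rfl

end RelOrder

section PsiRel

variable {G : Type*} [Group G] [Fintype G] (H : Subgroup G)

lemma psiRel_pos : 0 < psiRel G H :=
  sum_pos (fun x _ => relOrder_pos H x) univ_nonempty

lemma psiRel_lt_card_mul_index (hH : 1 < H.index) : psiRel G H < Fintype.card G * H.index := by
  have h := sum_lt_sum (fun x _ => relOrder_le_index H x)
    ⟨1, mem_univ _, (relOrder_one H).trans_lt hH⟩
  simpa [psiRel] using h

lemma sum_quotient_mk_eq_card_smul {M : Type*} [AddCommMonoid M] [Fintype (G ⧸ H)]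
    (f : G ⧸ H → M) :
    ∑ x : G, f x = Nat.card H • ∑ y : G ⧸ H, f y := by
  classical
  rw [← sum_fiberwise univ (fun x : G => (x : G ⧸ H)), smul_sum]
  refine sum_congr rfl fun y _ => ?_
  rw [sum_congr rfl fun x hx => congrArg f (mem_filter.mp hx).2, sum_const]
  congr 1
  simpa [Nat.card_eq_fintype_card, Fintype.card_subtype] using QuotientGroup.card_preimage_mk H {y}

lemma psiRel_eq_card_mul_psi [H.Normal] [Fintype (G ⧸ H)] :
    psiRel G H = Nat.card H * psi (G ⧸ H) := by
  simp only [psiRel, psi, relOrder_eq_orderOf_mk, sum_quotient_mk_eq_card_smul, smul_eq_mul]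

end PsiRel

def cyclicPsi (q : ℕ) : ℕ := ∑ d ∈ q.divisors, d.totient * d

lemma psi_of_isCyclic (C : Type*) [Group C] [Fintype C] [IsCyclic C] :
    psi C = cyclicPsi (Fintype.card C) := by
  classical
  rw [psi, cyclicPsi, ← sum_fiberwise_of_maps_to (t := (Fintype.card C).divisors)
    (fun x _ => Nat.mem_divisors.mpr ⟨orderOf_dvd_card, Fintype.card_ne_zero⟩)]
  refine sum_congr rfl fun d hd => ?_
  rw [sum_congr rfl fun x hx => (mem_filter.mp hx).2, sum_const, smul_eq_mul,
    IsCyclic.card_orderOf_eq_totient (Nat.mem_divisors.mp hd).1]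

lemma psiRel_of_isCyclic {C : Type*} [CommGroup C] [Fintype C] [IsCyclic C] (K : Subgroup C) :
    psiRel C K = Nat.card K * cyclicPsi K.index := by
  have : Fintype (C ⧸ K) := Fintype.ofFinite _
  rw [psiRel_eq_card_mul_psi, psi_of_isCyclic, ← Nat.card_eq_fintype_card, K.index_eq_card]

lemma cyclicPsi_mul {m n : ℕ} (h : m.Coprime n) :
    cyclicPsi (m * n) = cyclicPsi m * cyclicPsi n := by
  rw [cyclicPsi, Nat.divisors_mul, mul_def, sum_image h.mul_injOn_divisors, sum_product,
    cyclicPsi, cyclicPsi, sum_mul_sum]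
  refine sum_congr rfl fun a ha => sum_congr rfl fun b hb => ?_
  rw [Nat.totient_mul ((h.coprime_dvd_left (Nat.dvd_of_mem_divisors ha)).coprime_dvd_right
    (Nat.dvd_of_mem_divisors hb))]
  ring

lemma cyclicPsi_prime_pow {p : ℕ} (hp : p.Prime) (a : ℕ) :
    ((p : ℚ) + 1) * cyclicPsi (p ^ a) = (p : ℚ) ^ (2 * a + 1) + 1 := by
  induction a with
  | zero => simp [cyclicPsi]
  | succ a ih =>
    rw [cyclicPsi, Nat.sum_divisors_prime_pow hp] at ih ⊢
    rw [sum_range_succ, Nat.cast_add, mul_add, ih, Nat.totient_prime_pow_succ hp]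
    push_cast [Nat.cast_sub hp.one_le]
    ring

lemma sq_le_cyclicPsi_mul_prod {q : ℕ} (hq : q ≠ 0) :
    (q : ℚ) ^ 2 ≤ cyclicPsi q * ∏ p ∈ q.primeFactors, ((p : ℚ) + 1) / p := by
  have hmul : cyclicPsi q = ∏ p ∈ q.primeFactors, cyclicPsi (p ^ q.factorization p) := by
    rw [Nat.multiplicative_factorization _ (fun _ _ => cyclicPsi_mul) (by simp [cyclicPsi]) hq,
      Nat.prod_factorization_eq_prod_primeFactors]
  conv_lhs => rw [Nat.prod_primeFactors_pow_factorization hq]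
  rw [hmul]
  push_cast
  rw [← prod_pow, ← prod_mul_distrib]
  refine prod_le_prod (fun p _ => by positivity) fun p hp => ?_
  have hp := Nat.prime_of_mem_primeFactors hp
  have hp0 : (0 : ℚ) < p := by exact_mod_cast hp.pos
  rw [mul_div_assoc', le_div_iff₀ hp0, mul_comm _ ((p : ℚ) + 1), cyclicPsi_prime_pow hp]
  rw [← pow_mul, mul_comm _ 2, pow_succ]
  linarith

lemma prod_Ico_succ_div {m n : ℕ} (hm : 0 < m) (hmn : m ≤ n) :
    ∏ i ∈ Ico m n, ((i : ℚ) + 1) / i = n / m := by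
  induction n, hmn using Nat.le_induction with
  | base => simp [hm.ne']
  | succ n hmn ih =>
    have hn : (n : ℚ) ≠ 0 := Nat.cast_ne_zero.mpr (by omega)
    rw [prod_Ico_succ_top hmn, ih]
    field_simp
    push_cast
    ring

lemma prod_succ_div_le_of_subset_Ico {S : Finset ℕ} {m n : ℕ} (hS : S ⊆ Ico m n) (hm : 0 < m)
    (hmn : m ≤ n) : ∏ i ∈ S, ((i : ℚ) + 1) / i ≤ n / m := by
  rw [← prod_Ico_succ_div hm hmn]
  refine prod_le_prod_of_subset_of_one_le hS (fun i _ => by positivity) fun i hi _ => ?_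
  have hi : (0 : ℚ) < i := by exact_mod_cast hm.trans_le (mem_Ico.mp hi).1
  rw [one_le_div hi]
  linarith

lemma sq_mul_minFac_le_cyclicPsi_mul {q P : ℕ} (hq : q ≠ 0) (hP : ∀ p ∈ q.primeFactors, p ≤ P) :
    (q : ℚ) ^ 2 * q.minFac ≤ cyclicPsi q * (P + 1) := by
  have hmin : 0 < q.minFac := q.minFac_pos
  have hsub : q.primeFactors ⊆ Ico q.minFac (P + 1) := fun p hp =>
    mem_Ico.mpr ⟨Nat.minFac_le_of_dvd (Nat.prime_of_mem_primeFactors hp).two_le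
      (Nat.dvd_of_mem_primeFactors hp), Nat.lt_succ_of_le (hP p hp)⟩
  have hle : q.minFac ≤ P + 1 := by
    rcases eq_or_ne q 1 with rfl | hq1
    · simp
    · have := hsub (Nat.mem_primeFactors.mpr ⟨Nat.minFac_prime hq1, q.minFac_dvd, hq⟩)
      exact (mem_Ico.mp this).2.le
  calc (q : ℚ) ^ 2 * q.minFac
      ≤ cyclicPsi q * (∏ p ∈ q.primeFactors, ((p : ℚ) + 1) / p) * q.minFac := by
        gcongr; exact sq_le_cyclicPsi_mul_prod hq
    _ ≤ cyclicPsi q * ((P + 1 : ℕ) / q.minFac) * q.minFac := by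
        gcongr; exact prod_succ_div_le_of_subset_Ico hsub hmin hle
    _ = cyclicPsi q * (P + 1) := by field_simp; push_cast; ring

lemma psiRel_mul_minFac_lt {G : Type*} [Group G] [Fintype G] (H : Subgroup G) (hH : 1 < H.index)
    {P : ℕ} (hP : ∀ p ∈ H.index.primeFactors, p ≤ P) :
    (psiRel G H : ℚ) * H.index.minFac < (P + 1) * ((Nat.card H * cyclicPsi H.index : ℕ) : ℚ) := by
  have hnum : psiRel G H < Nat.card H * H.index ^ 2 := by
    have := psiRel_lt_card_mul_index H hH
    rwa [← Nat.card_eq_fintype_card, ← H.card_mul_index, mul_assoc, ← sq] at this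
  have hminFac : (0 : ℚ) < H.index.minFac := by exact_mod_cast H.index.minFac_pos
  calc (psiRel G H : ℚ) * H.index.minFac
      < Nat.card H * (H.index : ℚ) ^ 2 * H.index.minFac :=
        mul_lt_mul_of_pos_right (by exact_mod_cast hnum) hminFac
    _ ≤ Nat.card H * (cyclicPsi H.index * (P + 1)) := by
        rw [mul_assoc]
        exact mul_le_mul_of_nonneg_left (sq_mul_minFac_le_cyclicPsi_mul (by omega) hP)
          (by positivity)
    _ = (P + 1) * ((Nat.card H * cyclicPsi H.index : ℕ) : ℚ) := by push_cast; ring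

theorem psiRel_ratio_lt {G : Type*} [Group G] [Fintype G] (H : Subgroup G)
    (hq : 1 < H.index)
    (p₁ pk : ℕ) (hp₁ : p₁ = H.index.minFac)
    (hpk : pk.Prime) (hpkdvd : pk ∣ H.index)
    (hpkmax : ∀ p : ℕ, p.Prime → p ∣ H.index → p ≤ pk)
    (n : ℕ) [NeZero n] (hn : n = Fintype.card G)
    (K : Subgroup (Multiplicative (ZMod n))) (hK : Nat.card K = Nat.card H) :
    (psiRel G H : ℚ) / (psiRel (Multiplicative (ZMod n)) K : ℚ) < ((pk : ℚ) + 1) / p₁ ∧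
      (∀ p α : ℕ, p.Prime → 0 < α → H.index = p ^ α →
        (psiRel G H : ℚ) / (psiRel (Multiplicative (ZMod n)) K : ℚ) < ((p : ℚ) + 1) / p ∧
          ((p : ℚ) + 1) / p ≤ 3 / 2) := by
  have hKindex : K.index = H.index := by
    refine Nat.eq_of_mul_eq_mul_left (Nat.card_pos (α := H)) ?_
    rw [H.card_mul_index, ← hK, K.card_mul_index, Nat.card_eq_fintype_card (α := G), ← hn]
    simp
  have hden : psiRel (Multiplicative (ZMod n)) K = Nat.card H * cyclicPsi H.index := by
    rw [psiRel_of_isCyclic, hK, hKindex]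
  have hmain :
      (psiRel G H : ℚ) / (psiRel (Multiplicative (ZMod n)) K : ℚ) < ((pk : ℚ) + 1) / p₁ := by
    have hp₁_pos : (0 : ℚ) < p₁ := by rw [hp₁]; exact_mod_cast Nat.minFac_pos _
    rw [div_lt_div_iff₀ (by exact_mod_cast psiRel_pos K) hp₁_pos, hden, hp₁]
    exact psiRel_mul_minFac_lt H hq fun p hp =>
      hpkmax p (Nat.prime_of_mem_primeFactors hp) (Nat.dvd_of_mem_primeFactors hp)
  refine ⟨hmain, fun p α hp hα hidx => ⟨?_, ?_⟩⟩
  · have hpk_eq : pk = p :=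
      (Nat.prime_dvd_prime_iff_eq hpk hp).mp (hpk.dvd_of_dvd_pow (hidx ▸ hpkdvd))
    have hp₁_eq : p₁ = p := by rw [hp₁, hidx, Nat.pow_minFac hα.ne', hp.minFac_eq]
    subst hpk_eq hp₁_eq
    exact hmain
  · have : (2 : ℚ) ≤ p := by exact_mod_cast hp.two_le
    rw [div_le_div_iff₀ (by positivity) (by norm_num)]
    linarith
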